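/- arXiv:2102.05304 — 4 statements merged into one kernel-verified Lean document; each statement's English description precedes it below -/
import Mathlib

section
/- Let R_1, …, R_n be a rectangular floorplan of a rectangle R = [A,B] × [C,D]. If a rectangle R_i of the floorplan is disjoint from the boundary of R (i.e., R_i is contained in the interior of R), then R_i is adjacent to at least 4 other rectangles of the floorplan, i.e., there exist at least four indices j ≠ i such that R_i ∩ R_j contains more than one point. -/
open Set Filter

section auxRFP

lemma tend_sub (r δ : ℝ) : Tendsto (fun m : ℕ => r - δ/(m+1)) atTop (nhds r) := by
  have t0 : Tendsto (fun n : ℕ => 1 / ((n : ℝ) + 1)) atTop (nhds 0) :=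
    tendsto_one_div_add_atTop_nhds_zero_nat
  have h2 : Tendsto (fun m : ℕ => r - δ * (1/(m+1))) atTop (nhds (r - δ*0)) :=
    tendsto_const_nhds.sub (t0.const_mul δ)
  simpa [mul_one_div, div_eq_mul_inv] using h2

lemma tend_add (r δ : ℝ) : Tendsto (fun m : ℕ => r + δ/(m+1)) atTop (nhds r) := by
  simpa [neg_div, sub_neg_eq_add] using tend_sub r (-δ)

lemma seq_mem {ι : Type*} [Fintype ι] (S : ι → Set (ℝ×ℝ)) (hS : ∀ k, IsClosed (S k))
    (P : ι → Prop) (p : ℝ×ℝ) (u : ℕ → ℝ×ℝ) (hu : Tendsto u atTop (nhds p))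
    (hmem : ∀ m, ∃ k, P k ∧ u m ∈ S k) : ∃ k, P k ∧ p ∈ S k := by
  have hcl : IsClosed (⋃ k ∈ {k | P k}, S k) :=
    (Set.toFinite _).isClosed_biUnion (fun k _ => hS k)
  have hp : p ∈ ⋃ k ∈ {k | P k}, S k := by
    refine hcl.mem_of_tendsto hu (Filter.Eventually.of_forall fun m => ?_)
    obtain ⟨k, hk1, hk2⟩ := hmem m
    exact Set.mem_biUnion hk1 hk2
  simpa using hp

lemma ioo_meet {u v u' v' y : ℝ} (huv : u < v) (h1 : u ≤ y) (h2 : y ≤ v)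
    (h3 : u' < y) (h4 : y < v') : ∃ x, x ∈ Ioo u v ∧ x ∈ Ioo u' v' := by
  have hm : max u u' < min v v' := by
    rcases max_cases u u' with ⟨h,_⟩|⟨h,_⟩ <;> rcases min_cases v v' with ⟨h',_⟩|⟨h',_⟩ <;>
      rw [h, h'] <;> linarith
  refine ⟨(max u u' + min v v')/2, ⟨?_, ?_⟩, ⟨?_, ?_⟩⟩
  · have := le_max_left u u'; have := min_le_left v v'; linarith
  · have := le_max_left u u'; have := min_le_left v v'; linarith
  · have := le_max_right u u'; have := min_le_right v v'; linarith
  · have := le_max_right u u'; have := min_le_right v v'; linarith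

lemma prod_nt_left {s t : Set ℝ} (hs : s.Nontrivial) (ht : t.Nonempty) :
    (s ×ˢ t).Nontrivial := by
  obtain ⟨x1, h1, x2, h2, hne⟩ := hs
  obtain ⟨y, hy⟩ := ht
  exact ⟨(x1, y), ⟨h1, hy⟩, (x2, y), ⟨h2, hy⟩, by simp [hne]⟩

lemma prod_nt_right {s t : Set ℝ} (hs : s.Nonempty) (ht : t.Nontrivial) :
    (s ×ˢ t).Nontrivial := by
  obtain ⟨x, hx⟩ := hs
  obtain ⟨y1, h1, y2, h2, hne⟩ := ht
  exact ⟨(x, y1), ⟨hx, h1⟩, (x, y2), ⟨hx, h2⟩, by simp [hne]⟩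

lemma icc_nt {u v u' v' y : ℝ} (h1 : u < y) (h2 : y < v) (h3 : u' ≤ y) (h4 : y ≤ v')
    (h5 : u' < v') : (Icc (max u u') (min v v')).Nontrivial := by
  have hm : max u u' < min v v' := by
    rcases max_cases u u' with ⟨h,_⟩|⟨h,_⟩ <;> rcases min_cases v v' with ⟨h',_⟩|⟨h',_⟩ <;>
      rw [h, h'] <;> linarith
  exact ⟨max u u', ⟨le_rfl, hm.le⟩, min v v', ⟨hm.le, le_rfl⟩, hm.ne⟩

end auxRFP

/-- The closed axis-aligned rectangle `[a,b] × [c,d]` in the plane. -/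
def Rect (a b c d : ℝ) : Set (ℝ × ℝ) := Set.Icc a b ×ˢ Set.Icc c d

lemma mem_rect {a b c d : ℝ} {p : ℝ×ℝ} :
    p ∈ Rect a b c d ↔ (a ≤ p.1 ∧ p.1 ≤ b) ∧ (c ≤ p.2 ∧ p.2 ≤ d) := Iff.rfl

lemma rect_inter {a b c d a' b' c' d' : ℝ} :
    Rect a b c d ∩ Rect a' b' c' d' =
      Icc (max a a') (min b b') ×ˢ Icc (max c c') (min d d') := by
  rw [Rect, Rect, Set.prod_inter_prod, Set.Icc_inter_Icc, Set.Icc_inter_Icc]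

/-- `IsRFP A B C D a b c d` says that the family of rectangles
`[a k, b k] × [c k, d k]` is a rectangular floorplan of `[A,B] × [C,D]`:
each member is a nondegenerate rectangle, their union is the big rectangle,
their (open) interiors are pairwise disjoint, and no point lies in four of them. -/
def IsRFP {ι : Type*} [Fintype ι] (A B C D : ℝ) (a b c d : ι → ℝ) : Prop :=
  A < B ∧ C < D ∧
  (∀ k, a k < b k ∧ c k < d k) ∧
  (⋃ k, Rect (a k) (b k) (c k) (d k)) = Rect A B C D ∧
  ((Set.univ : Set ι).Pairwise fun i j =>
    Disjoint (Set.Ioo (a i) (b i) ×ˢ Set.Ioo (c i) (d i))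
             (Set.Ioo (a j) (b j) ×ˢ Set.Ioo (c j) (d j))) ∧
  (∀ p : ℝ × ℝ, {k : ι | p ∈ Rect (a k) (b k) (c k) (d k)}.ncard ≤ 3)

/-- The adjacency graph of a family of rectangles: `i ~ j` iff `i ≠ j` and
the intersection of the two rectangles contains more than one point. -/
def adjGraph {ι : Type*} (a b c d : ι → ℝ) : SimpleGraph ι :=
  SimpleGraph.fromRel fun i j =>
    (Rect (a i) (b i) (c i) (d i) ∩ Rect (a j) (b j) (c j) (d j)).Nontrivial

/-- A rectangle of a floorplan that is disjoint from the boundary of the big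
rectangle is adjacent to at least 4 other rectangles of the floorplan. -/
theorem stmt_2 {n : ℕ} (A B C D : ℝ) (a b c d : Fin n → ℝ)
    (h : IsRFP A B C D a b c d) (i : Fin n)
    (hbd : Disjoint (Rect (a i) (b i) (c i) (d i)) (frontier (Rect A B C D))) :
    4 ≤ {j : Fin n | j ≠ i ∧
      (Rect (a i) (b i) (c i) (d i) ∩ Rect (a j) (b j) (c j) (d j)).Nontrivial}.ncard := by
  obtain ⟨hAB, hCD, hnd, hcov, hdisj, -⟩ := h
  have hai : a i < b i := (hnd i).1
  have hci : c i < d i := (hnd i).2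
  set xM : ℝ := (a i + b i)/2 with hxM
  set yM : ℝ := (c i + d i)/2 with hyM
  have hx1 : a i < xM := by rw [hxM]; linarith
  have hx2 : xM < b i := by rw [hxM]; linarith
  have hy1 : c i < yM := by rw [hyM]; linarith
  have hy2 : yM < d i := by rw [hyM]; linarith
  have hsub : Rect (a i) (b i) (c i) (d i) ⊆ Rect A B C D := by
    rw [← hcov]; exact Set.subset_iUnion (fun k => Rect (a k) (b k) (c k) (d k)) i
  -- the rectangle lies in the open interior of the big rectangle
  have hintsub : Rect (a i) (b i) (c i) (d i) ⊆ Ioo A B ×ˢ Ioo C D := by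
    intro p hp
    have hp' := hsub hp
    have hfr : p ∉ frontier (Rect A B C D) := Set.disjoint_left.mp hbd hp
    have hclosed : IsClosed (Rect A B C D) := isClosed_Icc.prod isClosed_Icc
    have hint : interior (Rect A B C D) = Ioo A B ×ˢ Ioo C D := by
      rw [Rect, interior_prod_eq, interior_Icc, interior_Icc]
    rw [hclosed.frontier_eq] at hfr
    rw [← hint]
    by_contra hc
    exact hfr ⟨hp', hc⟩
  have hcor1m : ((a i, c i) : ℝ×ℝ) ∈ Rect (a i) (b i) (c i) (d i) :=
    mem_rect.2 ⟨⟨le_rfl, hai.le⟩, ⟨le_rfl, hci.le⟩⟩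
  have hcor2m : ((b i, d i) : ℝ×ℝ) ∈ Rect (a i) (b i) (c i) (d i) :=
    mem_rect.2 ⟨⟨hai.le, le_rfl⟩, ⟨hci.le, le_rfl⟩⟩
  have hcorner1 := hintsub hcor1m
  have hcorner2 := hintsub hcor2m
  have hA : A < a i := hcorner1.1.1
  have hB : b i < B := hcorner2.1.2
  have hC : C < c i := hcorner1.2.1
  have hD : d i < D := hcorner2.2.2
  have hRclosed : ∀ k : Fin n, IsClosed (Rect (a k) (b k) (c k) (d k)) :=
    fun k => isClosed_Icc.prod isClosed_Icc
  have hm1 : ∀ m : ℕ, (0:ℝ) < (m:ℝ)+1 := fun m => by positivity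
  -- the four neighbours
  have hLex : ∃ j, a j < a i ∧ (a i, yM) ∈ Rect (a j) (b j) (c j) (d j) := by
    refine seq_mem _ hRclosed _ _ (fun m => (a i - (a i - A)/(m+1), yM))
      ((tend_sub (a i) (a i - A)).prodMk_nhds tendsto_const_nhds) (fun m => ?_)
    have hq : 0 < (a i - A)/((m:ℝ)+1) := div_pos (by linarith) (hm1 m)
    have hq2 : (a i - A)/((m:ℝ)+1) ≤ a i - A := by
      apply div_le_self (by linarith)
      have := Nat.cast_nonneg (α := ℝ) m; linarith
    have hmem : (a i - (a i - A)/((m:ℝ)+1), yM) ∈ Rect A B C D :=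
      mem_rect.2 ⟨⟨by linarith, by linarith⟩, ⟨by linarith, by linarith⟩⟩
    rw [← hcov, Set.mem_iUnion] at hmem
    obtain ⟨k, hk⟩ := hmem
    exact ⟨k, by have := (mem_rect.1 hk).1.1; simp only at this; linarith, hk⟩
  have hRex : ∃ j, b i < b j ∧ (b i, yM) ∈ Rect (a j) (b j) (c j) (d j) := by
    refine seq_mem _ hRclosed _ _ (fun m => (b i + (B - b i)/(m+1), yM))
      ((tend_add (b i) (B - b i)).prodMk_nhds tendsto_const_nhds) (fun m => ?_)
    have hq : 0 < (B - b i)/((m:ℝ)+1) := div_pos (by linarith) (hm1 m)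
    have hq2 : (B - b i)/((m:ℝ)+1) ≤ B - b i := by
      apply div_le_self (by linarith)
      have := Nat.cast_nonneg (α := ℝ) m; linarith
    have hmem : (b i + (B - b i)/((m:ℝ)+1), yM) ∈ Rect A B C D :=
      mem_rect.2 ⟨⟨by linarith, by linarith⟩, ⟨by linarith, by linarith⟩⟩
    rw [← hcov, Set.mem_iUnion] at hmem
    obtain ⟨k, hk⟩ := hmem
    exact ⟨k, by have := (mem_rect.1 hk).1.2; simp only at this; linarith, hk⟩
  have hBex : ∃ j, c j < c i ∧ (xM, c i) ∈ Rect (a j) (b j) (c j) (d j) := by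
    refine seq_mem _ hRclosed _ _ (fun m => (xM, c i - (c i - C)/(m+1)))
      (tendsto_const_nhds.prodMk_nhds (tend_sub (c i) (c i - C))) (fun m => ?_)
    have hq : 0 < (c i - C)/((m:ℝ)+1) := div_pos (by linarith) (hm1 m)
    have hq2 : (c i - C)/((m:ℝ)+1) ≤ c i - C := by
      apply div_le_self (by linarith)
      have := Nat.cast_nonneg (α := ℝ) m; linarith
    have hmem : (xM, c i - (c i - C)/((m:ℝ)+1)) ∈ Rect A B C D :=
      mem_rect.2 ⟨⟨by linarith, by linarith⟩, ⟨by linarith, by linarith⟩⟩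
    rw [← hcov, Set.mem_iUnion] at hmem
    obtain ⟨k, hk⟩ := hmem
    exact ⟨k, by have := (mem_rect.1 hk).2.1; simp only at this; linarith, hk⟩
  have hTex : ∃ j, d i < d j ∧ (xM, d i) ∈ Rect (a j) (b j) (c j) (d j) := by
    refine seq_mem _ hRclosed _ _ (fun m => (xM, d i + (D - d i)/(m+1)))
      (tendsto_const_nhds.prodMk_nhds (tend_add (d i) (D - d i))) (fun m => ?_)
    have hq : 0 < (D - d i)/((m:ℝ)+1) := div_pos (by linarith) (hm1 m)
    have hq2 : (D - d i)/((m:ℝ)+1) ≤ D - d i := by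
      apply div_le_self (by linarith)
      have := Nat.cast_nonneg (α := ℝ) m; linarith
    have hmem : (xM, d i + (D - d i)/((m:ℝ)+1)) ∈ Rect A B C D :=
      mem_rect.2 ⟨⟨by linarith, by linarith⟩, ⟨by linarith, by linarith⟩⟩
    rw [← hcov, Set.mem_iUnion] at hmem
    obtain ⟨k, hk⟩ := hmem
    exact ⟨k, by have := (mem_rect.1 hk).2.2; simp only at this; linarith, hk⟩
  obtain ⟨jL, hjL, hjLm⟩ := hLex
  obtain ⟨jR, hjR, hjRm⟩ := hRex
  obtain ⟨jB, hjB, hjBm⟩ := hBex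
  obtain ⟨jT, hjT, hjTm⟩ := hTex
  have LM := mem_rect.1 hjLm
  have RM := mem_rect.1 hjRm
  have BM := mem_rect.1 hjBm
  have TM := mem_rect.1 hjTm
  simp only at LM RM BM TM
  -- key rigidity lemma: any rectangle covering the midpoint coordinates is R_i itself
  have key : ∀ j, a j ≤ xM → xM ≤ b j → c j ≤ yM → yM ≤ d j → j = i := by
    intro j h1 h2 h3 h4
    by_contra hne
    have hd := hdisj (Set.mem_univ j) (Set.mem_univ i) hne
    obtain ⟨x', hxj, hxi⟩ := ioo_meet (hnd j).1 h1 h2 hx1 hx2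
    obtain ⟨y', hyj, hyi⟩ := ioo_meet (hnd j).2 h3 h4 hy1 hy2
    have p1 : ((x', y') : ℝ×ℝ) ∈ Ioo (a j) (b j) ×ˢ Ioo (c j) (d j) := ⟨hxj, hyj⟩
    have p2 : ((x', y') : ℝ×ℝ) ∈ Ioo (a i) (b i) ×ˢ Ioo (c i) (d i) := ⟨hxi, hyi⟩
    exact Set.disjoint_left.mp hd p1 p2
  -- distinctness
  have dLR : jL ≠ jR := by
    intro e
    have := key jL (by linarith) (by rw [e]; linarith) LM.2.1 LM.2.2
    rw [this] at hjL; exact absurd hjL (lt_irrefl _)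
  have dLB : jL ≠ jB := by
    intro e
    have := key jL (by rw [e]; exact BM.1.1) (by rw [e]; exact BM.1.2) LM.2.1 LM.2.2
    rw [this] at hjL; exact absurd hjL (lt_irrefl _)
  have dLT : jL ≠ jT := by
    intro e
    have := key jL (by rw [e]; exact TM.1.1) (by rw [e]; exact TM.1.2) LM.2.1 LM.2.2
    rw [this] at hjL; exact absurd hjL (lt_irrefl _)
  have dRB : jR ≠ jB := by
    intro e
    have := key jR (by rw [e]; exact BM.1.1) (by rw [e]; exact BM.1.2) RM.2.1 RM.2.2
    rw [this] at hjR; exact absurd hjR (lt_irrefl _)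
  have dRT : jR ≠ jT := by
    intro e
    have := key jR (by rw [e]; exact TM.1.1) (by rw [e]; exact TM.1.2) RM.2.1 RM.2.2
    rw [this] at hjR; exact absurd hjR (lt_irrefl _)
  have dBT : jB ≠ jT := by
    intro e
    have h4 : yM ≤ d jB := by rw [e]; linarith [TM.2.2]
    have := key jB BM.1.1 BM.1.2 (by linarith [BM.2.1]) h4
    rw [this] at hjB; exact absurd hjB (lt_irrefl _)
  -- memberships in the target set
  have memL : jL ∈ {j : Fin n | j ≠ i ∧
      (Rect (a i) (b i) (c i) (d i) ∩ Rect (a j) (b j) (c j) (d j)).Nontrivial} := by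
    refine ⟨fun e => by rw [e] at hjL; exact absurd hjL (lt_irrefl _), ?_⟩
    rw [rect_inter]
    refine prod_nt_right (Set.nonempty_Icc.2 ?_) (icc_nt hy1 hy2 LM.2.1 LM.2.2 (hnd jL).2)
    simp only [le_min_iff, max_le_iff]
    refine ⟨⟨?_, ?_⟩, ?_, ?_⟩ <;> linarith [LM.1.1, LM.1.2, (hnd jL).1]
  have memR : jR ∈ {j : Fin n | j ≠ i ∧
      (Rect (a i) (b i) (c i) (d i) ∩ Rect (a j) (b j) (c j) (d j)).Nontrivial} := by
    refine ⟨fun e => by rw [e] at hjR; exact absurd hjR (lt_irrefl _), ?_⟩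
    rw [rect_inter]
    refine prod_nt_right (Set.nonempty_Icc.2 ?_) (icc_nt hy1 hy2 RM.2.1 RM.2.2 (hnd jR).2)
    simp only [le_min_iff, max_le_iff]
    refine ⟨⟨?_, ?_⟩, ?_, ?_⟩ <;> linarith [RM.1.1, RM.1.2, (hnd jR).1]
  have memB : jB ∈ {j : Fin n | j ≠ i ∧
      (Rect (a i) (b i) (c i) (d i) ∩ Rect (a j) (b j) (c j) (d j)).Nontrivial} := by
    refine ⟨fun e => by rw [e] at hjB; exact absurd hjB (lt_irrefl _), ?_⟩
    rw [rect_inter]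
    refine prod_nt_left (icc_nt hx1 hx2 BM.1.1 BM.1.2 (hnd jB).1) (Set.nonempty_Icc.2 ?_)
    simp only [le_min_iff, max_le_iff]
    refine ⟨⟨?_, ?_⟩, ?_, ?_⟩ <;> linarith [BM.2.1, BM.2.2, (hnd jB).2]
  have memT : jT ∈ {j : Fin n | j ≠ i ∧
      (Rect (a i) (b i) (c i) (d i) ∩ Rect (a j) (b j) (c j) (d j)).Nontrivial} := by
    refine ⟨fun e => by rw [e] at hjT; exact absurd hjT (lt_irrefl _), ?_⟩
    rw [rect_inter]
    refine prod_nt_left (icc_nt hx1 hx2 TM.1.1 TM.1.2 (hnd jT).1) (Set.nonempty_Icc.2 ?_)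
    simp only [le_min_iff, max_le_iff]
    refine ⟨⟨?_, ?_⟩, ?_, ?_⟩ <;> linarith [TM.2.1, TM.2.2, (hnd jT).2]
  -- counting
  have hss : ({jL, jR, jB, jT} : Set (Fin n)) ⊆ {j : Fin n | j ≠ i ∧
      (Rect (a i) (b i) (c i) (d i) ∩ Rect (a j) (b j) (c j) (d j)).Nontrivial} := by
    rintro j hj
    simp only [Set.mem_insert_iff, Set.mem_singleton_iff] at hj
    rcases hj with rfl | rfl | rfl | rfl
    · exact memL
    · exact memR
    · exact memB
    · exact memT
  have hc : ({jL, jR, jB, jT} : Set (Fin n)).ncard = 4 := by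
    rw [Set.ncard_insert_of_notMem (by simp [dLR, dLB, dLT]) (Set.toFinite _),
        Set.ncard_insert_of_notMem (by simp [dRB, dRT]) (Set.toFinite _),
        Set.ncard_insert_of_notMem (by simp [dBT]) (Set.toFinite _),
        Set.ncard_singleton]
  calc (4:ℕ) = ({jL, jR, jB, jT} : Set (Fin n)).ncard := hc.symm
    _ ≤ _ := Set.ncard_le_ncard hss (Set.toFinite _)
end

section
/- Let R_1, …, R_n be a rectangular floorplan of a rectangle R = [A,B] × [C,D]. If a rectangle R_i of the floorplan contains exactly one of the four corner points of R (a corner rectangle), then R_i is adjacent to at least 2 other rectangles of the floorplan. -/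
open Set

lemma mem_Rect {a b c d x y : ℝ} :
    (x, y) ∈ Rect a b c d ↔ (a ≤ x ∧ x ≤ b) ∧ (c ≤ y ∧ y ≤ d) := by
  simp [Rect, Set.mem_prod]; tauto

lemma cover_right {n : ℕ} {A B C D : ℝ} {a b c d : Fin n → ℝ}
    (hun : (⋃ k, Rect (a k) (b k) (c k) (d k)) = Rect A B C D)
    {x0 y : ℝ} (h1 : A ≤ x0) (h2 : x0 < B) (h3 : C ≤ y) (h4 : y ≤ D) :
    ∃ j, a j ≤ x0 ∧ x0 < b j ∧ c j ≤ y ∧ y ≤ d j := by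
  set δ := B - x0 with hδ
  have hδpos : (0:ℝ) < δ := by simp [hδ]; linarith
  have hmem : ∀ m : ℕ, (x0 + δ / (m + 1), y) ∈ ⋃ k, Rect (a k) (b k) (c k) (d k) := by
    intro m
    rw [hun, mem_Rect]
    have hm1 : (1:ℝ) ≤ (m:ℝ) + 1 := by
      have : (0:ℝ) ≤ (m:ℝ) := Nat.cast_nonneg m
      linarith
    have hp : 0 < δ / ((m:ℝ) + 1) := by positivity
    have hle : δ / ((m:ℝ) + 1) ≤ δ := div_le_self hδpos.le hm1
    exact ⟨⟨by linarith, by linarith⟩, h3, h4⟩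
  choose f hf using fun m => mem_iUnion.mp (hmem m)
  obtain ⟨j, hj⟩ := Finite.exists_infinite_fiber f
  have hinf : (f ⁻¹' {j}).Infinite := Set.infinite_coe_iff.mp hj
  obtain ⟨m0, hm0⟩ := hinf.nonempty
  have hfm0 : f m0 = j := hm0
  have hm0R := hf m0
  rw [hfm0, mem_Rect] at hm0R
  have hp0 : 0 < δ / ((m0:ℝ) + 1) := by positivity
  refine ⟨j, ?_, by linarith [hm0R.1.2], hm0R.2.1, hm0R.2.2⟩
  by_contra h'
  push_neg at h'
  obtain ⟨N, hN⟩ := exists_nat_gt (δ / (a j - x0))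
  obtain ⟨m, hmfib, hmN⟩ := hinf.exists_gt N
  have hfm : f m = j := hmfib
  have hmR := hf m
  rw [hfm, mem_Rect] at hmR
  have hsub : 0 < a j - x0 := by linarith
  have hlt : δ / (a j - x0) < (m:ℝ) + 1 := by
    have : (N:ℝ) ≤ (m:ℝ) := by exact_mod_cast hmN.le
    linarith
  have : δ < ((m:ℝ) + 1) * (a j - x0) := (div_lt_iff₀ hsub).mp hlt
  have hmc : (0:ℝ) < (m:ℝ) + 1 := by positivity
  have : δ / ((m:ℝ) + 1) < a j - x0 := (div_lt_iff₀ hmc).mpr (by linarith)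
  linarith [hmR.1.1]

lemma cover_left {n : ℕ} {A B C D : ℝ} {a b c d : Fin n → ℝ}
    (hun : (⋃ k, Rect (a k) (b k) (c k) (d k)) = Rect A B C D)
    {x0 y : ℝ} (h1 : A < x0) (h2 : x0 ≤ B) (h3 : C ≤ y) (h4 : y ≤ D) :
    ∃ j, a j < x0 ∧ x0 ≤ b j ∧ c j ≤ y ∧ y ≤ d j := by
  set δ := x0 - A with hδ
  have hδpos : (0:ℝ) < δ := by simp [hδ]; linarith
  have hmem : ∀ m : ℕ, (x0 - δ / (m + 1), y) ∈ ⋃ k, Rect (a k) (b k) (c k) (d k) := by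
    intro m
    rw [hun, mem_Rect]
    have hm1 : (1:ℝ) ≤ (m:ℝ) + 1 := by
      have : (0:ℝ) ≤ (m:ℝ) := Nat.cast_nonneg m
      linarith
    have hp : 0 < δ / ((m:ℝ) + 1) := by positivity
    have hle : δ / ((m:ℝ) + 1) ≤ δ := div_le_self hδpos.le hm1
    exact ⟨⟨by linarith, by linarith⟩, h3, h4⟩
  choose f hf using fun m => mem_iUnion.mp (hmem m)
  obtain ⟨j, hj⟩ := Finite.exists_infinite_fiber f
  have hinf : (f ⁻¹' {j}).Infinite := Set.infinite_coe_iff.mp hj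
  obtain ⟨m0, hm0⟩ := hinf.nonempty
  have hfm0 : f m0 = j := hm0
  have hm0R := hf m0
  rw [hfm0, mem_Rect] at hm0R
  have hp0 : 0 < δ / ((m0:ℝ) + 1) := by positivity
  refine ⟨j, by linarith [hm0R.1.1], ?_, hm0R.2.1, hm0R.2.2⟩
  by_contra h'
  push_neg at h'
  obtain ⟨N, hN⟩ := exists_nat_gt (δ / (x0 - b j))
  obtain ⟨m, hmfib, hmN⟩ := hinf.exists_gt N
  have hfm : f m = j := hmfib
  have hmR := hf m
  rw [hfm, mem_Rect] at hmR
  have hsub : 0 < x0 - b j := by linarith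
  have hlt : δ / (x0 - b j) < (m:ℝ) + 1 := by
    have : (N:ℝ) ≤ (m:ℝ) := by exact_mod_cast hmN.le
    linarith
  have : δ < ((m:ℝ) + 1) * (x0 - b j) := (div_lt_iff₀ hsub).mp hlt
  have hmc : (0:ℝ) < (m:ℝ) + 1 := by positivity
  have : δ / ((m:ℝ) + 1) < x0 - b j := (div_lt_iff₀ hmc).mpr (by linarith)
  linarith [hmR.1.2]

lemma cover_up {n : ℕ} {A B C D : ℝ} {a b c d : Fin n → ℝ}
    (hun : (⋃ k, Rect (a k) (b k) (c k) (d k)) = Rect A B C D)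
    {x y0 : ℝ} (h1 : C ≤ y0) (h2 : y0 < D) (h3 : A ≤ x) (h4 : x ≤ B) :
    ∃ j, c j ≤ y0 ∧ y0 < d j ∧ a j ≤ x ∧ x ≤ b j := by
  set δ := D - y0 with hδ
  have hδpos : (0:ℝ) < δ := by simp [hδ]; linarith
  have hmem : ∀ m : ℕ, (x, y0 + δ / (m + 1)) ∈ ⋃ k, Rect (a k) (b k) (c k) (d k) := by
    intro m
    rw [hun, mem_Rect]
    have hm1 : (1:ℝ) ≤ (m:ℝ) + 1 := by
      have : (0:ℝ) ≤ (m:ℝ) := Nat.cast_nonneg m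
      linarith
    have hp : 0 < δ / ((m:ℝ) + 1) := by positivity
    have hle : δ / ((m:ℝ) + 1) ≤ δ := div_le_self hδpos.le hm1
    exact ⟨⟨h3, h4⟩, by linarith, by linarith⟩
  choose f hf using fun m => mem_iUnion.mp (hmem m)
  obtain ⟨j, hj⟩ := Finite.exists_infinite_fiber f
  have hinf : (f ⁻¹' {j}).Infinite := Set.infinite_coe_iff.mp hj
  obtain ⟨m0, hm0⟩ := hinf.nonempty
  have hfm0 : f m0 = j := hm0
  have hm0R := hf m0
  rw [hfm0, mem_Rect] at hm0R
  have hp0 : 0 < δ / ((m0:ℝ) + 1) := by positivity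
  refine ⟨j, ?_, by linarith [hm0R.2.2], hm0R.1.1, hm0R.1.2⟩
  by_contra h'
  push_neg at h'
  obtain ⟨N, hN⟩ := exists_nat_gt (δ / (c j - y0))
  obtain ⟨m, hmfib, hmN⟩ := hinf.exists_gt N
  have hfm : f m = j := hmfib
  have hmR := hf m
  rw [hfm, mem_Rect] at hmR
  have hsub : 0 < c j - y0 := by linarith
  have hlt : δ / (c j - y0) < (m:ℝ) + 1 := by
    have : (N:ℝ) ≤ (m:ℝ) := by exact_mod_cast hmN.le
    linarith
  have : δ < ((m:ℝ) + 1) * (c j - y0) := (div_lt_iff₀ hsub).mp hlt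
  have hmc : (0:ℝ) < (m:ℝ) + 1 := by positivity
  have : δ / ((m:ℝ) + 1) < c j - y0 := (div_lt_iff₀ hmc).mpr (by linarith)
  linarith [hmR.2.1]

lemma cover_down {n : ℕ} {A B C D : ℝ} {a b c d : Fin n → ℝ}
    (hun : (⋃ k, Rect (a k) (b k) (c k) (d k)) = Rect A B C D)
    {x y0 : ℝ} (h1 : C < y0) (h2 : y0 ≤ D) (h3 : A ≤ x) (h4 : x ≤ B) :
    ∃ j, c j < y0 ∧ y0 ≤ d j ∧ a j ≤ x ∧ x ≤ b j := by
  set δ := y0 - C with hδ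
  have hδpos : (0:ℝ) < δ := by simp [hδ]; linarith
  have hmem : ∀ m : ℕ, (x, y0 - δ / (m + 1)) ∈ ⋃ k, Rect (a k) (b k) (c k) (d k) := by
    intro m
    rw [hun, mem_Rect]
    have hm1 : (1:ℝ) ≤ (m:ℝ) + 1 := by
      have : (0:ℝ) ≤ (m:ℝ) := Nat.cast_nonneg m
      linarith
    have hp : 0 < δ / ((m:ℝ) + 1) := by positivity
    have hle : δ / ((m:ℝ) + 1) ≤ δ := div_le_self hδpos.le hm1
    exact ⟨⟨h3, h4⟩, by linarith, by linarith⟩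
  choose f hf using fun m => mem_iUnion.mp (hmem m)
  obtain ⟨j, hj⟩ := Finite.exists_infinite_fiber f
  have hinf : (f ⁻¹' {j}).Infinite := Set.infinite_coe_iff.mp hj
  obtain ⟨m0, hm0⟩ := hinf.nonempty
  have hfm0 : f m0 = j := hm0
  have hm0R := hf m0
  rw [hfm0, mem_Rect] at hm0R
  have hp0 : 0 < δ / ((m0:ℝ) + 1) := by positivity
  refine ⟨j, by linarith [hm0R.2.1], ?_, hm0R.1.1, hm0R.1.2⟩
  by_contra h'
  push_neg at h'
  obtain ⟨N, hN⟩ := exists_nat_gt (δ / (y0 - d j))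
  obtain ⟨m, hmfib, hmN⟩ := hinf.exists_gt N
  have hfm : f m = j := hmfib
  have hmR := hf m
  rw [hfm, mem_Rect] at hmR
  have hsub : 0 < y0 - d j := by linarith
  have hlt : δ / (y0 - d j) < (m:ℝ) + 1 := by
    have : (N:ℝ) ≤ (m:ℝ) := by exact_mod_cast hmN.le
    linarith
  have : δ < ((m:ℝ) + 1) * (y0 - d j) := (div_lt_iff₀ hsub).mp hlt
  have hmc : (0:ℝ) < (m:ℝ) + 1 := by positivity
  have : δ / ((m:ℝ) + 1) < y0 - d j := (div_lt_iff₀ hmc).mpr (by linarith)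
  linarith [hmR.2.2]

lemma ntriv_vert {ai bi ci di aj bj cj dj t y : ℝ}
    (h1 : ai ≤ t) (h2 : t ≤ bi) (h3 : aj ≤ t) (h4 : t ≤ bj)
    (h5 : ci < y) (h6 : y < di) (h7 : cj ≤ y) (h8 : y ≤ dj) (h9 : cj < dj) :
    (Rect ai bi ci di ∩ Rect aj bj cj dj).Nontrivial := by
  have hlt : max ci cj < min di dj := by
    by_contra hcon
    push_neg at hcon
    rcases max_cases ci cj with ⟨e1, e2⟩ | ⟨e1, e2⟩ <;>
      rcases min_cases di dj with ⟨e3, e4⟩ | ⟨e3, e4⟩ <;> linarith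
  refine ⟨(t, max ci cj), ⟨?_, ?_⟩, (t, min di dj), ⟨?_, ?_⟩, ?_⟩
  · exact mem_Rect.mpr ⟨⟨h1, h2⟩, le_max_left _ _, hlt.le.trans (min_le_left _ _)⟩
  · exact mem_Rect.mpr ⟨⟨h3, h4⟩, le_max_right _ _, hlt.le.trans (min_le_right _ _)⟩
  · exact mem_Rect.mpr ⟨⟨h1, h2⟩, (le_max_left _ _).trans hlt.le, min_le_left _ _⟩
  · exact mem_Rect.mpr ⟨⟨h3, h4⟩, (le_max_right _ _).trans hlt.le, min_le_right _ _⟩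
  · exact fun he => hlt.ne (congrArg Prod.snd he)

lemma ntriv_horiz {ai bi ci di aj bj cj dj s x : ℝ}
    (h1 : ci ≤ s) (h2 : s ≤ di) (h3 : cj ≤ s) (h4 : s ≤ dj)
    (h5 : ai < x) (h6 : x < bi) (h7 : aj ≤ x) (h8 : x ≤ bj) (h9 : aj < bj) :
    (Rect ai bi ci di ∩ Rect aj bj cj dj).Nontrivial := by
  have hlt : max ai aj < min bi bj := by
    by_contra hcon
    push_neg at hcon
    rcases max_cases ai aj with ⟨e1, e2⟩ | ⟨e1, e2⟩ <;>
      rcases min_cases bi bj with ⟨e3, e4⟩ | ⟨e3, e4⟩ <;> linarith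
  refine ⟨(max ai aj, s), ⟨?_, ?_⟩, (min bi bj, s), ⟨?_, ?_⟩, ?_⟩
  · exact mem_Rect.mpr ⟨⟨le_max_left _ _, hlt.le.trans (min_le_left _ _)⟩, h1, h2⟩
  · exact mem_Rect.mpr ⟨⟨le_max_right _ _, hlt.le.trans (min_le_right _ _)⟩, h3, h4⟩
  · exact mem_Rect.mpr ⟨⟨(le_max_left _ _).trans hlt.le, min_le_left _ _⟩, h1, h2⟩
  · exact mem_Rect.mpr ⟨⟨(le_max_right _ _).trans hlt.le, min_le_right _ _⟩, h3, h4⟩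
  · exact fun he => hlt.ne (congrArg Prod.fst he)

/-- A rectangle of a floorplan that contains exactly one of the four corners
of the big rectangle is adjacent to at least 2 other rectangles. -/
theorem stmt_3 {n : ℕ} (A B C D : ℝ) (a b c d : Fin n → ℝ)
    (h : IsRFP A B C D a b c d) (i : Fin n)
    (hcorner : ∃! p : ℝ × ℝ, p ∈ ({(A, C), (A, D), (B, C), (B, D)} : Set (ℝ × ℝ)) ∧
      p ∈ Rect (a i) (b i) (c i) (d i)) :
    2 ≤ {j : Fin n | j ≠ i ∧
      (Rect (a i) (b i) (c i) (d i) ∩ Rect (a j) (b j) (c j) (d j)).Nontrivial}.ncard := by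
  obtain ⟨hAB, hCD, hne, hun, hdisj, -⟩ := h
  obtain ⟨hiab, hicd⟩ := hne i
  obtain ⟨p, ⟨hpc, hpR⟩, huniq⟩ := hcorner
  have hsub : Rect (a i) (b i) (c i) (d i) ⊆ Rect A B C D := by
    rw [← hun]
    exact Set.subset_iUnion (fun k => Rect (a k) (b k) (c k) (d k)) i
  have hmc1 := mem_Rect.mp (hsub (mem_Rect.mpr
    ⟨⟨le_refl _, hiab.le⟩, le_refl _, hicd.le⟩))
  have hmc2 := mem_Rect.mp (hsub (mem_Rect.mpr
    ⟨⟨hiab.le, le_refl _⟩, hicd.le, le_refl _⟩))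
  have hAa : A ≤ a i := hmc1.1.1
  have hbB : b i ≤ B := hmc2.1.2
  have hCc : C ≤ c i := hmc1.2.1
  have hdD : d i ≤ D := hmc2.2.2
  set x : ℝ := (a i + b i) / 2 with hx
  set y : ℝ := (c i + d i) / 2 with hy
  have hx1 : a i < x := by rw [hx]; linarith
  have hx2 : x < b i := by rw [hx]; linarith
  have hy1 : c i < y := by rw [hy]; linarith
  have hy2 : y < d i := by rw [hy]; linarith
  set S : Set (Fin n) := {j : Fin n | j ≠ i ∧
      (Rect (a i) (b i) (c i) (d i) ∩ Rect (a j) (b j) (c j) (d j)).Nontrivial} with hS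
  have finish : ∀ j1 j2 : Fin n, j1 ∈ S → j2 ∈ S → j1 ≠ j2 → 2 ≤ S.ncard := by
    intro j1 j2 hj1 hj2 hne12
    have hsub2 : ({j1, j2} : Set (Fin n)) ⊆ S := by
      intro z hz
      simp only [Set.mem_insert_iff, Set.mem_singleton_iff] at hz
      rcases hz with rfl | rfl
      exacts [hj1, hj2]
    calc 2 = ({j1, j2} : Set (Fin n)).ncard := (Set.ncard_pair hne12).symm
      _ ≤ S.ncard := Set.ncard_le_ncard hsub2 (Set.toFinite S)
  have hint : ∀ j : Fin n, i ≠ j → ∀ u : ℝ × ℝ,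
      u ∈ Set.Ioo (a i) (b i) ×ˢ Set.Ioo (c i) (d i) →
      u ∈ Set.Ioo (a j) (b j) ×ˢ Set.Ioo (c j) (d j) → False := by
    intro j hij u hu1 hu2
    exact Set.disjoint_left.mp (hdisj (Set.mem_univ i) (Set.mem_univ j) hij) hu1 hu2
  simp only [Set.mem_insert_iff, Set.mem_singleton_iff] at hpc
  rcases hpc with rfl | rfl | rfl | rfl
  -- Case p = (A, C)
  · obtain ⟨⟨haiA, hAbi⟩, hciC, hCdi⟩ := mem_Rect.mp hpR
    have hbiB : b i < B := by
      by_contra hcon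
      push_neg at hcon
      have heq := huniq (B, C) ⟨by simp, mem_Rect.mpr ⟨⟨by linarith, hcon⟩, hciC, hCdi⟩⟩
      have hBA := congrArg Prod.fst heq
      simp at hBA
      linarith
    have hdiD : d i < D := by
      by_contra hcon
      push_neg at hcon
      have heq := huniq (A, D) ⟨by simp, mem_Rect.mpr ⟨⟨haiA, hAbi⟩, by linarith, hcon⟩⟩
      have hDC := congrArg Prod.snd heq
      simp at hDC
      linarith
    obtain ⟨j1, hj11, hj12, hj13, hj14⟩ := cover_right hun (by linarith : A ≤ b i) hbiB
      (by linarith : C ≤ y) (by linarith : y ≤ D)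
    obtain ⟨j2, hj21, hj22, hj23, hj24⟩ := cover_up hun (by linarith : C ≤ d i) hdiD
      (by linarith : A ≤ x) (by linarith : x ≤ B)
    have hj1i : j1 ≠ i := fun he => by rw [he] at hj12; linarith
    have hj2i : j2 ≠ i := fun he => by rw [he] at hj22; linarith
    have hj1S : j1 ∈ S := ⟨hj1i, ntriv_vert hiab.le (le_refl _) hj11 hj12.le
      hy1 hy2 hj13 hj14 (hne j1).2⟩
    have hj2S : j2 ∈ S := ⟨hj2i, ntriv_horiz hicd.le (le_refl _) hj21 hj22.le
      hx1 hx2 hj23 hj24 (hne j2).1⟩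
    have hj12ne : j1 ≠ j2 := by
      intro he
      rw [← he] at hj21 hj22 hj23 hj24
      have hu1 : ((x + b i)/2, (y + d i)/2) ∈ Set.Ioo (a i) (b i) ×ˢ Set.Ioo (c i) (d i) := by
        simp only [Set.mem_prod, Set.mem_Ioo]
        refine ⟨⟨?_, ?_⟩, ?_, ?_⟩ <;> linarith
      have hu2 : ((x + b i)/2, (y + d i)/2) ∈ Set.Ioo (a j1) (b j1) ×ˢ Set.Ioo (c j1) (d j1) := by
        simp only [Set.mem_prod, Set.mem_Ioo]
        refine ⟨⟨?_, ?_⟩, ?_, ?_⟩ <;> linarith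
      exact hint j1 (Ne.symm hj1i) _ hu1 hu2
    exact finish j1 j2 hj1S hj2S hj12ne
  -- Case p = (A, D)
  · obtain ⟨⟨haiA, hAbi⟩, hciD, hDdi⟩ := mem_Rect.mp hpR
    have hbiB : b i < B := by
      by_contra hcon
      push_neg at hcon
      have heq := huniq (B, D) ⟨by simp, mem_Rect.mpr ⟨⟨by linarith, hcon⟩, hciD, hDdi⟩⟩
      have hBA := congrArg Prod.fst heq
      simp at hBA
      linarith
    have hCci : C < c i := by
      by_contra hcon
      push_neg at hcon
      have heq := huniq (A, C) ⟨by simp, mem_Rect.mpr ⟨⟨haiA, hAbi⟩, hcon, by linarith⟩⟩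
      have hCD2 := congrArg Prod.snd heq
      simp at hCD2
      linarith
    obtain ⟨j1, hj11, hj12, hj13, hj14⟩ := cover_right hun (by linarith : A ≤ b i) hbiB
      (by linarith : C ≤ y) (by linarith : y ≤ D)
    obtain ⟨j2, hj21, hj22, hj23, hj24⟩ := cover_down hun hCci (by linarith : c i ≤ D)
      (by linarith : A ≤ x) (by linarith : x ≤ B)
    have hj1i : j1 ≠ i := fun he => by rw [he] at hj12; linarith
    have hj2i : j2 ≠ i := fun he => by rw [he] at hj21; linarith
    have hj1S : j1 ∈ S := ⟨hj1i, ntriv_vert hiab.le (le_refl _) hj11 hj12.le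
      hy1 hy2 hj13 hj14 (hne j1).2⟩
    have hj2S : j2 ∈ S := ⟨hj2i, ntriv_horiz (le_refl _) hicd.le hj21.le hj22
      hx1 hx2 hj23 hj24 (hne j2).1⟩
    have hj12ne : j1 ≠ j2 := by
      intro he
      rw [← he] at hj21 hj22 hj23 hj24
      have hu1 : ((x + b i)/2, (c i + y)/2) ∈ Set.Ioo (a i) (b i) ×ˢ Set.Ioo (c i) (d i) := by
        simp only [Set.mem_prod, Set.mem_Ioo]
        refine ⟨⟨?_, ?_⟩, ?_, ?_⟩ <;> linarith
      have hu2 : ((x + b i)/2, (c i + y)/2) ∈ Set.Ioo (a j1) (b j1) ×ˢ Set.Ioo (c j1) (d j1) := by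
        simp only [Set.mem_prod, Set.mem_Ioo]
        refine ⟨⟨?_, ?_⟩, ?_, ?_⟩ <;> linarith
      exact hint j1 (Ne.symm hj1i) _ hu1 hu2
    exact finish j1 j2 hj1S hj2S hj12ne
  -- Case p = (B, C)
  · obtain ⟨⟨haiB, hBbi⟩, hciC, hCdi⟩ := mem_Rect.mp hpR
    have hAai : A < a i := by
      by_contra hcon
      push_neg at hcon
      have heq := huniq (A, C) ⟨by simp, mem_Rect.mpr ⟨⟨hcon, by linarith⟩, hciC, hCdi⟩⟩
      have hAB2 := congrArg Prod.fst heq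
      simp at hAB2
      linarith
    have hdiD : d i < D := by
      by_contra hcon
      push_neg at hcon
      have heq := huniq (B, D) ⟨by simp, mem_Rect.mpr ⟨⟨haiB, hBbi⟩, by linarith, hcon⟩⟩
      have hDC := congrArg Prod.snd heq
      simp at hDC
      linarith
    obtain ⟨j1, hj11, hj12, hj13, hj14⟩ := cover_left hun hAai (by linarith : a i ≤ B)
      (by linarith : C ≤ y) (by linarith : y ≤ D)
    obtain ⟨j2, hj21, hj22, hj23, hj24⟩ := cover_up hun (by linarith : C ≤ d i) hdiD
      (by linarith : A ≤ x) (by linarith : x ≤ B)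
    have hj1i : j1 ≠ i := fun he => by rw [he] at hj11; linarith
    have hj2i : j2 ≠ i := fun he => by rw [he] at hj22; linarith
    have hj1S : j1 ∈ S := ⟨hj1i, ntriv_vert (le_refl _) hiab.le hj11.le hj12
      hy1 hy2 hj13 hj14 (hne j1).2⟩
    have hj2S : j2 ∈ S := ⟨hj2i, ntriv_horiz hicd.le (le_refl _) hj21 hj22.le
      hx1 hx2 hj23 hj24 (hne j2).1⟩
    have hj12ne : j1 ≠ j2 := by
      intro he
      rw [← he] at hj21 hj22 hj23 hj24
      have hu1 : ((a i + x)/2, (y + d i)/2) ∈ Set.Ioo (a i) (b i) ×ˢ Set.Ioo (c i) (d i) := by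
        simp only [Set.mem_prod, Set.mem_Ioo]
        refine ⟨⟨?_, ?_⟩, ?_, ?_⟩ <;> linarith
      have hu2 : ((a i + x)/2, (y + d i)/2) ∈ Set.Ioo (a j1) (b j1) ×ˢ Set.Ioo (c j1) (d j1) := by
        simp only [Set.mem_prod, Set.mem_Ioo]
        refine ⟨⟨?_, ?_⟩, ?_, ?_⟩ <;> linarith
      exact hint j1 (Ne.symm hj1i) _ hu1 hu2
    exact finish j1 j2 hj1S hj2S hj12ne
  -- Case p = (B, D)
  · obtain ⟨⟨haiB, hBbi⟩, hciD, hDdi⟩ := mem_Rect.mp hpR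
    have hAai : A < a i := by
      by_contra hcon
      push_neg at hcon
      have heq := huniq (A, D) ⟨by simp, mem_Rect.mpr ⟨⟨hcon, by linarith⟩, hciD, hDdi⟩⟩
      have hAB2 := congrArg Prod.fst heq
      simp at hAB2
      linarith
    have hCci : C < c i := by
      by_contra hcon
      push_neg at hcon
      have heq := huniq (B, C) ⟨by simp, mem_Rect.mpr ⟨⟨haiB, hBbi⟩, hcon, by linarith⟩⟩
      have hCD2 := congrArg Prod.snd heq
      simp at hCD2
      linarith
    obtain ⟨j1, hj11, hj12, hj13, hj14⟩ := cover_left hun hAai (by linarith : a i ≤ B)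
      (by linarith : C ≤ y) (by linarith : y ≤ D)
    obtain ⟨j2, hj21, hj22, hj23, hj24⟩ := cover_down hun hCci (by linarith : c i ≤ D)
      (by linarith : A ≤ x) (by linarith : x ≤ B)
    have hj1i : j1 ≠ i := fun he => by rw [he] at hj11; linarith
    have hj2i : j2 ≠ i := fun he => by rw [he] at hj21; linarith
    have hj1S : j1 ∈ S := ⟨hj1i, ntriv_vert (le_refl _) hiab.le hj11.le hj12
      hy1 hy2 hj13 hj14 (hne j1).2⟩
    have hj2S : j2 ∈ S := ⟨hj2i, ntriv_horiz (le_refl _) hicd.le hj21.le hj22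
      hx1 hx2 hj23 hj24 (hne j2).1⟩
    have hj12ne : j1 ≠ j2 := by
      intro he
      rw [← he] at hj21 hj22 hj23 hj24
      have hu1 : ((a i + x)/2, (c i + y)/2) ∈ Set.Ioo (a i) (b i) ×ˢ Set.Ioo (c i) (d i) := by
        simp only [Set.mem_prod, Set.mem_Ioo]
        refine ⟨⟨?_, ?_⟩, ?_, ?_⟩ <;> linarith
      have hu2 : ((a i + x)/2, (c i + y)/2) ∈ Set.Ioo (a j1) (b j1) ×ˢ Set.Ioo (c j1) (d j1) := by
        simp only [Set.mem_prod, Set.mem_Ioo]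
        refine ⟨⟨?_, ?_⟩, ?_, ?_⟩ <;> linarith
      exact hint j1 (Ne.symm hj1i) _ hu1 hu2
    exact finish j1 j2 hj1S hj2S hj12ne
end

section
/- Let R_1, …, R_n (n ≥ 1) be a rectangular floorplan of a rectangle R = [A,B] × [C,D]. Then the adjacency graph of the floorplan — the simple graph on vertex set {1, …, n} in which i and j are joined by an edge if and only if i ≠ j and R_i ∩ R_j contains more than one point — is connected. -/
open Set

lemma joinedIn_diff_countable' {s : Set (ℝ × ℝ)} (hs : Convex ℝ s) (hso : IsOpen s)
    {F : Set (ℝ × ℝ)} (hF : F.Countable) {p q : ℝ × ℝ}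
    (hp : p ∈ s \ F) (hq : q ∈ s \ F) : JoinedIn (s \ F) p q := by
  have hrank : 1 < Module.rank ℝ (ℝ × ℝ) := by
    rw [rank_prod, Module.rank_self]
    norm_num
  rcases eq_or_ne p q with rfl | hpq
  · exact JoinedIn.refl hp
  let c := (2 : ℝ)⁻¹ • (p + q)
  let x := (2 : ℝ)⁻¹ • (q - p)
  have Ia : c - x = p := by simp only [c, x]; module
  have Ib : c + x = q := by simp only [c, x]; module
  have x_ne_zero : x ≠ 0 := by simpa [x] using sub_ne_zero.2 hpq.symm
  obtain ⟨y, hy⟩ : ∃ y, LinearIndependent ℝ ![x, y] :=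
    exists_linearIndependent_pair_of_one_lt_rank hrank x_ne_zero
  have A : Set.Countable {t : ℝ | (segment ℝ (c + x) (c + t • y) ∩ F).Nonempty} := by
    apply countable_setOf_nonempty_of_disjoint _ (fun t ↦ inter_subset_right) hF
    intro t t' htt'
    apply disjoint_iff_inter_eq_empty.2
    have N : {c + x} ∩ F = ∅ := by
      simpa only [singleton_inter_eq_empty, Ib] using hq.2
    rw [inter_assoc, inter_comm F, inter_assoc, inter_self, ← inter_assoc, ← subset_empty_iff, ← N]
    apply inter_subset_inter_left
    apply Eq.subset
    apply segment_inter_eq_endpoint_of_linearIndependent_of_ne hy htt'.symm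
  have B : Set.Countable {t : ℝ | (segment ℝ (c - x) (c + t • y) ∩ F).Nonempty} := by
    apply countable_setOf_nonempty_of_disjoint _ (fun t ↦ inter_subset_right) hF
    intro t t' htt'
    apply disjoint_iff_inter_eq_empty.2
    have N : {c - x} ∩ F = ∅ := by
      simpa only [singleton_inter_eq_empty, Ia] using hp.2
    rw [inter_assoc, inter_comm F, inter_assoc, inter_self, ← inter_assoc, ← subset_empty_iff, ← N]
    apply inter_subset_inter_left
    rw [sub_eq_add_neg _ x]
    apply Eq.subset
    apply segment_inter_eq_endpoint_of_linearIndependent_of_ne _ htt'.symm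
    convert hy.units_smul ![-1, 1]
    simp [← List.ofFn_inj]
    all_goals rfl
  have hc : c ∈ s := by
    have := hs hp.1 hq.1 (by norm_num : (0:ℝ) ≤ (2:ℝ)⁻¹) (by norm_num : (0:ℝ) ≤ (2:ℝ)⁻¹)
      (by norm_num)
    convert this using 1
    simp only [c]
    module
  have hcont : Continuous fun t : ℝ => c + t • y := by fun_prop
  have hTopen : IsOpen {t : ℝ | c + t • y ∈ s} := hso.preimage hcont
  have hT0 : (0 : ℝ) ∈ {t : ℝ | c + t • y ∈ s} := by simp [hc]
  obtain ⟨t, ht, htT⟩ := ((A.union B).dense_compl ℝ).exists_mem_open hTopen ⟨0, hT0⟩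
  simp only [compl_union, mem_inter_iff, mem_compl_iff, mem_setOf_eq,
    not_nonempty_iff_eq_empty] at ht
  set z := c + t • y with hz
  have hzs : z ∈ s := htT
  have JA : JoinedIn (s \ F) p z := by
    apply JoinedIn.of_segment_subset
    rw [subset_diff]
    constructor
    · rw [← Ia]; exact hs.segment_subset (Ia ▸ hp.1) hzs
    · rw [disjoint_iff_inter_eq_empty, ← Ia]
      exact ht.2
  have JB : JoinedIn (s \ F) q z := by
    apply JoinedIn.of_segment_subset
    rw [subset_diff]
    constructor
    · rw [← Ib]; exact hs.segment_subset (Ib ▸ hq.1) hzs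
    · rw [disjoint_iff_inter_eq_empty, ← Ib]
      exact ht.1
  exact JA.trans JB.symm

/-- The adjacency graph of a rectangular floorplan is connected. -/
theorem stmt_5 {n : ℕ} (hn : 1 ≤ n) (A B C D : ℝ) (a b c d : Fin n → ℝ)
    (h : IsRFP A B C D a b c d) :
    (adjGraph a b c d).Connected := by
  obtain ⟨hAB, hCD, hnd, hunion, hdisj, hcard⟩ := h
  have hne : Nonempty (Fin n) := ⟨⟨0, hn⟩⟩
  set i0 : Fin n := ⟨0, hn⟩ with hi0def
  set G := adjGraph a b c d with hG
  suffices hreach : ∀ j, G.Reachable i0 j by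
    exact ⟨fun u v => (hreach u).symm.trans (hreach v)⟩
  by_contra hcon
  push_neg at hcon
  obtain ⟨j0, hj0⟩ := hcon
  set S : Set (Fin n) := {i | G.Reachable i0 i} with hS
  have hclosedR : ∀ k : Fin n, IsClosed (Rect (a k) (b k) (c k) (d k)) := fun k =>
    isClosed_Icc.prod isClosed_Icc
  set U := ⋃ i ∈ S, Rect (a i) (b i) (c i) (d i) with hU
  set V := ⋃ i ∈ Sᶜ, Rect (a i) (b i) (c i) (d i) with hV
  have hUc : IsClosed U := S.toFinite.isClosed_biUnion fun i _ => hclosedR i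
  have hVc : IsClosed V := Sᶜ.toFinite.isClosed_biUnion fun i _ => hclosedR i
  have hsub : ∀ i ∈ S, ∀ j ∈ Sᶜ,
      (Rect (a i) (b i) (c i) (d i) ∩ Rect (a j) (b j) (c j) (d j)).Subsingleton := by
    intro i hi j hj
    rw [← Set.not_nontrivial_iff]
    intro hnt
    apply hj
    refine SimpleGraph.Reachable.trans (hi : G.Reachable i0 i) (SimpleGraph.Adj.reachable ?_)
    exact (SimpleGraph.fromRel_adj _ i j).2 ⟨fun hij => hj (hij ▸ hi), Or.inl hnt⟩
  set F := U ∩ V with hF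
  have hFfin : F.Finite := by
    have hsubF : F ⊆ ⋃ i ∈ S, ⋃ j ∈ Sᶜ,
        (Rect (a i) (b i) (c i) (d i) ∩ Rect (a j) (b j) (c j) (d j)) := by
      rintro x ⟨hxU, hxV⟩
      obtain ⟨i, hi, hxi⟩ := mem_iUnion₂.1 hxU
      obtain ⟨j, hj, hxj⟩ := mem_iUnion₂.1 hxV
      exact mem_biUnion hi (mem_biUnion hj ⟨hxi, hxj⟩)
    exact Set.Finite.subset
      (S.toFinite.biUnion fun i hi => Sᶜ.toFinite.biUnion fun j hj => (hsub i hi j hj).finite)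
      hsubF
  set sO := Ioo A B ×ˢ Ioo C D with hsO
  have hint : interior (Rect A B C D) = sO := by
    rw [Rect, interior_prod_eq, interior_Icc, interior_Icc]
  have hrect_sub : ∀ k, Rect (a k) (b k) (c k) (d k) ⊆ Rect A B C D := by
    intro k
    rw [← hunion]
    exact subset_iUnion (fun k => Rect (a k) (b k) (c k) (d k)) k
  have hOsub : ∀ k, Ioo (a k) (b k) ×ˢ Ioo (c k) (d k) ⊆ sO := by
    intro k
    rw [← hint]
    apply interior_maximal _ (isOpen_Ioo.prod isOpen_Ioo)
    exact (Set.prod_mono Ioo_subset_Icc_self Ioo_subset_Icc_self).trans (hrect_sub k)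
  have hOinf : ∀ k, (Ioo (a k) (b k) ×ˢ Ioo (c k) (d k)).Infinite := by
    intro k
    exact (Set.Ioo_infinite (hnd k).1).prod_left (Set.nonempty_Ioo.2 (hnd k).2)
  have hpick : ∀ k, ∃ p ∈ Ioo (a k) (b k) ×ˢ Ioo (c k) (d k), p ∉ F := by
    intro k
    obtain ⟨p, hp⟩ := ((hOinf k).diff hFfin).nonempty
    exact ⟨p, hp.1, hp.2⟩
  obtain ⟨p, hpO, hpF⟩ := hpick i0
  obtain ⟨q, hqO, hqF⟩ := hpick j0
  have hi0S : i0 ∈ S := SimpleGraph.Reachable.refl i0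
  have hj0S : j0 ∈ Sᶜ := hj0
  set K := sO \ F with hK
  have hpK : p ∈ K := ⟨hOsub i0 hpO, hpF⟩
  have hqK : q ∈ K := ⟨hOsub j0 hqO, hqF⟩
  have hKpre : IsPreconnected K := by
    have : IsPathConnected K :=
      ⟨p, hpK, fun {y} hy => joinedIn_diff_countable'
        ((convex_Ioo A B).prod (convex_Ioo C D)) (isOpen_Ioo.prod isOpen_Ioo)
        hFfin.countable hpK hy⟩
    exact this.isConnected.isPreconnected
  have hKsub : K ⊆ U ∪ V := by
    intro x hx
    have hxR : x ∈ Rect A B C D :=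
      (Set.prod_mono Ioo_subset_Icc_self Ioo_subset_Icc_self) hx.1
    rw [← hunion] at hxR
    obtain ⟨k, hk⟩ := mem_iUnion.1 hxR
    by_cases hkS : k ∈ S
    · exact Or.inl (mem_biUnion hkS hk)
    · exact Or.inr (mem_biUnion hkS hk)
  have hpU : p ∈ U :=
    mem_biUnion hi0S ((Set.prod_mono Ioo_subset_Icc_self Ioo_subset_Icc_self) hpO)
  have hqV : q ∈ V :=
    mem_biUnion hj0S ((Set.prod_mono Ioo_subset_Icc_self Ioo_subset_Icc_self) hqO)
  obtain ⟨x, hxK, hxUV⟩ := isPreconnected_closed_iff.1 hKpre U V hUc hVc hKsub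
    ⟨p, hpK, hpU⟩ ⟨q, hqK, hqV⟩
  exact hxK.2 hxUV
end

section
/- Let R_1, …, R_n be a rectangular floorplan of a rectangle R = [A,B] × [C,D], and suppose the rectangle R_i spans the full width of R but touches neither the top nor the bottom side of R; that is, a_i = A, b_i = B, C < c_i and d_i < D. Then i is a cut vertex of the adjacency graph G of the floorplan: G is connected and the induced subgraph of G on {1,…,n} \ {i} is disconnected. (The symmetric statement holds for a rectangle spanning the full height of R and touching neither the left nor the right side.) -/
open Set
open MeasureTheory

lemma rect_isClosed (a b c d : ℝ) : IsClosed (Rect a b c d) :=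
  isClosed_Icc.prod isClosed_Icc

lemma rect_convex (a b c d : ℝ) : Convex ℝ (Rect a b c d) :=
  (convex_Icc a b).prod (convex_Icc c d)

lemma rect_null_diff (a b c d : ℝ) :
    volume (Rect a b c d \ Ioo a b ×ˢ Ioo c d) = 0 := by
  have hsub : Rect a b c d \ Ioo a b ×ˢ Ioo c d ⊆
      (({a} ∪ {b} : Set ℝ) ×ˢ Icc c d) ∪ (Icc a b ×ˢ ({c} ∪ {d} : Set ℝ)) := by
    rintro ⟨x, y⟩ ⟨hxy, hmem⟩
    have hx : x ∈ Icc a b := hxy.1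
    have hy : y ∈ Icc c d := hxy.2
    by_cases hxo : x ∈ Ioo a b
    · have hyo : y ∉ Ioo c d := fun hyo => hmem ⟨hxo, hyo⟩
      right
      refine ⟨hx, ?_⟩
      rcases lt_or_ge c y with h1 | h1
      · rcases lt_or_ge y d with h2 | h2
        · exact absurd ⟨h1, h2⟩ hyo
        · right; exact le_antisymm hy.2 h2
      · left; exact le_antisymm h1 hy.1
    · left
      refine ⟨?_, hy⟩
      rcases lt_or_ge a x with h1 | h1
      · rcases lt_or_ge x b with h2 | h2
        · exact absurd ⟨h1, h2⟩ hxo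
        · right; exact le_antisymm hx.2 h2
      · left; exact le_antisymm h1 hx.1
  refine measure_mono_null hsub (measure_union_null ?_ ?_)
  · rw [Measure.volume_eq_prod, Measure.prod_prod]
    have h0 : volume (({a} ∪ {b} : Set ℝ)) = 0 :=
      measure_union_null (measure_singleton a) (measure_singleton b)
    rw [h0, zero_mul]
  · rw [Measure.volume_eq_prod, Measure.prod_prod]
    have h0 : volume (({c} ∪ {d} : Set ℝ)) = 0 :=
      measure_union_null (measure_singleton c) (measure_singleton d)
    rw [h0, mul_zero]

lemma open_rect_pos {a b c d : ℝ} (h1 : a < b) (h2 : c < d) :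
    0 < volume (Ioo a b ×ˢ Ioo c d) := by
  rw [Measure.volume_eq_prod, Measure.prod_prod, Real.volume_Ioo, Real.volume_Ioo]
  exact ENNReal.mul_pos (ENNReal.ofReal_pos.mpr (by linarith)).ne'
    (ENNReal.ofReal_pos.mpr (by linarith)).ne'

lemma span_pair_ne_top (p f : ℝ × ℝ) : affineSpan ℝ {p, f} ≠ ⊤ := by
  intro h
  have h1 : Collinear ℝ ({p, f} : Set (ℝ × ℝ)) := collinear_pair ℝ p f
  rw [Collinear] at h1
  have h2 : vectorSpan ℝ ({p, f} : Set (ℝ × ℝ)) = ⊤ := by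
    rw [← direction_affineSpan, h, AffineSubspace.direction_top]
  rw [h2] at h1
  have : Module.rank ℝ (ℝ × ℝ) ≤ 1 := by simpa using h1
  rw [rank_prod', Module.rank_self] at this
  norm_num at this

lemma mem_span_of_seg {p z f : ℝ × ℝ} (hf : f ∈ segment ℝ p z) (hfp : f ≠ p) :
    z ∈ affineSpan ℝ {p, f} := by
  rw [segment_eq_image_lineMap] at hf
  obtain ⟨t, ht, rfl⟩ := hf
  have ht0 : t ≠ 0 := by rintro rfl; exact hfp (AffineMap.lineMap_apply_zero _ _)
  have key : AffineMap.lineMap p (AffineMap.lineMap p z t) t⁻¹ = z := by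
    simp only [AffineMap.lineMap_apply, vsub_eq_sub, vadd_eq_add, add_sub_cancel_right,
      smul_smul, inv_mul_cancel₀ ht0, one_smul]
    abel
  have hm := AffineMap.lineMap_mem_affineSpan_pair (k := ℝ) t⁻¹ p (AffineMap.lineMap p z t)
  rwa [key] at hm


lemma rfp_reach {n : ℕ} (A B C D : ℝ) (a b c d : Fin n → ℝ)
    (h : IsRFP A B C D a b c d) (i k : Fin n) :
    (adjGraph a b c d).Reachable i k := by
  obtain ⟨hAB, hCD, hnd, hcover, hdisj, -⟩ := h
  by_contra hm
  set G := adjGraph a b c d with hG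
  set Rk : Fin n → Set (ℝ × ℝ) := fun j => Rect (a j) (b j) (c j) (d j) with hRk
  set Ok : Fin n → Set (ℝ × ℝ) := fun j => Ioo (a j) (b j) ×ˢ Ioo (c j) (d j) with hOk
  set S : Set (Fin n) := {j | G.Reachable i j} with hS
  have hiS : i ∈ S := SimpleGraph.Reachable.refl i
  have hmS : k ∉ S := hm
  have hclosed : ∀ u ∈ S, ∀ v, G.Adj u v → v ∈ S := fun u hu v huv =>
    hu.trans huv.reachable
  have hsub : ∀ u ∈ S, ∀ v ∈ Sᶜ, (Rk u ∩ Rk v).Subsingleton := by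
    intro u hu v hv
    have hne : u ≠ v := fun e => hv (e ▸ hu)
    have hnadj : ¬ G.Adj u v := fun hadj => hv (hclosed u hu v hadj)
    rw [hG, adjGraph, SimpleGraph.fromRel_adj] at hnadj
    push_neg at hnadj
    have := (hnadj hne).1
    exact this
  set U : Set (ℝ × ℝ) := ⋃ j ∈ S, Rk j with hU
  set W : Set (ℝ × ℝ) := ⋃ j ∈ Sᶜ, Rk j with hW
  have hUclosed : IsClosed U :=
    (S.toFinite).isClosed_biUnion fun j _ => rect_isClosed _ _ _ _
  have hWclosed : IsClosed W :=
    (Sᶜ.toFinite).isClosed_biUnion fun j _ => rect_isClosed _ _ _ _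
  have hUW : U ∪ W = Rect A B C D := by
    rw [← hcover]
    ext x
    simp only [hU, hW, mem_union, mem_iUnion, exists_prop]
    constructor
    · rintro (⟨j, _, hx⟩ | ⟨j, _, hx⟩) <;> exact ⟨j, hx⟩
    · rintro ⟨j, hx⟩
      by_cases hj : j ∈ S
      · exact Or.inl ⟨j, hj, hx⟩
      · exact Or.inr ⟨j, hj, hx⟩
  set F : Set (ℝ × ℝ) := U ∩ W with hF
  have hFfin : F.Finite := by
    have hss : F ⊆ ⋃ u ∈ S, ⋃ v ∈ Sᶜ, (Rk u ∩ Rk v) := by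
      rintro x ⟨hxU, hxW⟩
      simp only [hU, mem_iUnion, exists_prop] at hxU
      simp only [hW, mem_iUnion, exists_prop] at hxW
      obtain ⟨u, hu, hxu⟩ := hxU
      obtain ⟨v, hv, hxv⟩ := hxW
      simp only [mem_iUnion, exists_prop]
      exact ⟨u, hu, v, hv, hxu, hxv⟩
    exact Set.Finite.subset
      ((S.toFinite).biUnion fun u hu => (Sᶜ.toFinite).biUnion fun v hv =>
        (hsub u hu v hv).finite) hss
  have hFnull : volume F = 0 := hFfin.measure_zero _
  have hfr : ∀ j, volume (Rk j \ Ok j) = 0 := fun j => rect_null_diff _ _ _ _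
  have hnull_in : ∀ (j : Fin n) (T : Set (Fin n)), j ∉ T →
      volume ((⋃ u ∈ T, Rk u) ∩ Ok j) = 0 := by
    intro j T hj
    have hss : (⋃ u ∈ T, Rk u) ∩ Ok j ⊆ ⋃ u ∈ T, (Rk u \ Ok u) := by
      rintro x ⟨hxU, hxO⟩
      simp only [mem_iUnion, exists_prop] at hxU ⊢
      obtain ⟨u, hu, hxu⟩ := hxU
      refine ⟨u, hu, hxu, fun hxo => ?_⟩
      have hne : u ≠ j := fun e => hj (e ▸ hu)
      exact (hdisj (mem_univ u) (mem_univ j) hne).le_bot ⟨hxo, hxO⟩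
    refine measure_mono_null hss ?_
    exact (measure_biUnion_null_iff (T.to_countable)).mpr fun u _ => hfr u
  have hOpos : ∀ j, 0 < volume (Ok j) := fun j => open_rect_pos (hnd j).1 (hnd j).2
  have hp : ∃ p ∈ Ok k, p ∉ U := by
    by_contra hcon
    push_neg at hcon
    have hss : Ok k ⊆ U ∩ Ok k := fun x hx => ⟨hcon x hx, hx⟩
    exact (hOpos k).ne' (le_antisymm (le_of_le_of_eq (measure_mono hss)
      (hnull_in k S hmS)) zero_le)
  obtain ⟨p, hpO, hpU⟩ := hp
  have hq : ∃ q ∈ Ok i, q ∉ W := by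
    by_contra hcon
    push_neg at hcon
    have hss : Ok i ⊆ W ∩ Ok i := fun x hx => ⟨hcon x hx, hx⟩
    exact (hOpos i).ne' (le_antisymm (le_of_le_of_eq (measure_mono hss)
      (hnull_in i Sᶜ (fun hi => hi hiS))) zero_le)
  obtain ⟨q, hqO, hqW⟩ := hq
  have hpF : p ∉ F := fun hpf => hpU hpf.1
  have hqF : q ∉ F := fun hqf => hqW hqf.2
  set Z : Set (ℝ × ℝ) := F ∪ ⋃ f ∈ F,
      ((affineSpan ℝ {p, f} : Set (ℝ × ℝ)) ∪ (affineSpan ℝ {q, f} : Set (ℝ × ℝ))) with hZ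
  have hZnull : volume Z = 0 := by
    refine measure_union_null hFnull ?_
    refine (measure_biUnion_null_iff hFfin.countable).mpr fun f _ => ?_
    exact measure_union_null
      (Measure.addHaar_affineSubspace volume _ (span_pair_ne_top p f))
      (Measure.addHaar_affineSubspace volume _ (span_pair_ne_top q f))
  have hz : ∃ z ∈ Ok i, z ∉ Z := by
    by_contra hcon
    push_neg at hcon
    have hss : Ok i ⊆ Z := fun x hx => hcon x hx
    exact (hOpos i).ne' (le_antisymm (le_of_le_of_eq (measure_mono hss) hZnull)
      zero_le)
  obtain ⟨z, hzO, hzZ⟩ := hz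
  have hRsub : ∀ j, Rk j ⊆ Rect A B C D := fun j => hcover ▸ Set.subset_iUnion
    (fun j => Rect (a j) (b j) (c j) (d j)) j
  have hOsub : ∀ j, Ok j ⊆ Rk j := fun j x hx =>
    ⟨Ioo_subset_Icc_self hx.1, Ioo_subset_Icc_self hx.2⟩
  have hpR : p ∈ Rect A B C D := hRsub k (hOsub k hpO)
  have hqR : q ∈ Rect A B C D := hRsub i (hOsub i hqO)
  have hzR : z ∈ Rect A B C D := hRsub i (hOsub i hzO)
  set P : Set (ℝ × ℝ) := segment ℝ p z ∪ segment ℝ z q with hP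
  have hPconn : IsPreconnected P :=
    IsPreconnected.union z (right_mem_segment ℝ p z) (left_mem_segment ℝ z q)
      (convex_segment p z).isPreconnected (convex_segment z q).isPreconnected
  have hPR : P ⊆ Rect A B C D :=
    union_subset ((rect_convex A B C D).segment_subset hpR hzR)
      ((rect_convex A B C D).segment_subset hzR hqR)
  have hPF : ∀ f ∈ F, f ∉ P := by
    intro f hf hfP
    rcases hfP with hfs | hfs
    · have hfp : f ≠ p := fun e => hpF (e ▸ hf)
      have hmem := mem_span_of_seg hfs hfp
      exact hzZ (Or.inr (mem_iUnion₂.mpr ⟨f, hf, Or.inl hmem⟩))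
    · have hfq : f ≠ q := fun e => hqF (e ▸ hf)
      rw [segment_symm] at hfs
      have hmem := mem_span_of_seg hfs hfq
      exact hzZ (Or.inr (mem_iUnion₂.mpr ⟨f, hf, Or.inr hmem⟩))
  have hPcover : P ⊆ Wᶜ ∪ Uᶜ := by
    intro x hx
    by_contra hcon
    simp only [mem_union, mem_compl_iff, not_or, not_not] at hcon
    exact hPF x ⟨hcon.2, hcon.1⟩ hx
  have hne := hPconn Wᶜ Uᶜ hWclosed.isOpen_compl hUclosed.isOpen_compl hPcover
    ⟨q, Or.inr (right_mem_segment ℝ z q), hqW⟩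
    ⟨p, Or.inl (left_mem_segment ℝ p z), hpU⟩
  obtain ⟨x, hxP, hxW, hxU⟩ := hne
  have hxUW : x ∈ U ∪ W := hUW ▸ hPR hxP
  rcases hxUW with hx | hx
  · exact hxU hx
  · exact hxW hx

/-- A rectangle of a floorplan spanning the full width of the big rectangle but
touching neither the top nor the bottom side is a cut vertex of the adjacency
graph. -/
theorem stmt_8 {n : ℕ} (A B C D : ℝ) (a b c d : Fin n → ℝ)
    (h : IsRFP A B C D a b c d) (i : Fin n)
    (ha : a i = A) (hb : b i = B) (hc : C < c i) (hd : d i < D) :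
    (adjGraph a b c d).Connected ∧
    ¬ ((adjGraph a b c d).induce ({i}ᶜ : Set (Fin n))).Connected := by
  have hRFP := h
  obtain ⟨hAB, hCD, hnd, hcover, hdisj, -⟩ := h
  constructor
  · have hne : Nonempty (Fin n) := ⟨i⟩
    have hpre : (adjGraph a b c d).Preconnected := fun u v =>
      (rfp_reach A B C D a b c d hRFP i u).symm.trans (rfp_reach A B C D a b c d hRFP i v)
    exact ⟨hpre⟩
  · intro hconn
    set G := adjGraph a b c d with hG
    -- bounds on rectangles
    have hRsub : ∀ j, Rect (a j) (b j) (c j) (d j) ⊆ Rect A B C D := fun j =>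
      hcover ▸ Set.subset_iUnion (fun j => Rect (a j) (b j) (c j) (d j)) j
    have hbnd : ∀ j, A ≤ a j ∧ b j ≤ B ∧ C ≤ c j ∧ d j ≤ D := by
      intro j
      have hm1 : ((a j, c j) : ℝ × ℝ) ∈ Rect (a j) (b j) (c j) (d j) :=
        ⟨⟨le_refl (a j), (hnd j).1.le⟩, ⟨le_refl (c j), (hnd j).2.le⟩⟩
      have hm2 : ((b j, d j) : ℝ × ℝ) ∈ Rect (a j) (b j) (c j) (d j) :=
        ⟨⟨(hnd j).1.le, le_refl (b j)⟩, ⟨(hnd j).2.le, le_refl (d j)⟩⟩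
      have h1 := hRsub j hm1
      have h2 := hRsub j hm2
      exact ⟨h1.1.1, h2.1.2, h1.2.1, h2.2.2⟩
    -- trichotomy
    have htri : ∀ j, j ≠ i → d j ≤ c i ∨ d i ≤ c j := by
      intro j hji
      by_contra hcon
      push_neg at hcon
      obtain ⟨h1, h2⟩ := hcon
      have hbj := hbnd j
      set x := (a j + b j) / 2 with hx
      set y := (max (c j) (c i) + min (d j) (d i)) / 2 with hy
      have hxj : x ∈ Ioo (a j) (b j) := ⟨by simp [hx]; linarith [(hnd j).1], by simp [hx]; linarith [(hnd j).1]⟩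
      have hxi : x ∈ Ioo (a i) (b i) := by
        constructor
        · rw [ha]; calc A ≤ a j := hbj.1
                     _ < x := hxj.1
        · rw [hb]; calc x < b j := hxj.2
                     _ ≤ B := hbj.2.1
      have hmaxmin : max (c j) (c i) < min (d j) (d i) := by
        rcases max_cases (c j) (c i) with ⟨he, _⟩ | ⟨he, _⟩ <;>
        rcases min_cases (d j) (d i) with ⟨he2, _⟩ | ⟨he2, _⟩ <;>
        rw [he, he2] <;> linarith [(hnd j).2, (hnd i).2]
      have hyj : y ∈ Ioo (c j) (d j) := by
        constructor
        · calc c j ≤ max (c j) (c i) := le_max_left _ _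
               _ < y := by rw [hy]; linarith
        · calc y < min (d j) (d i) := by rw [hy]; linarith
               _ ≤ d j := min_le_left _ _
      have hyi : y ∈ Ioo (c i) (d i) := by
        constructor
        · calc c i ≤ max (c j) (c i) := le_max_right _ _
               _ < y := by rw [hy]; linarith
        · calc y < min (d j) (d i) := by rw [hy]; linarith
               _ ≤ d i := min_le_right _ _
      have hmem1 : ((x, y) : ℝ × ℝ) ∈ Ioo (a j) (b j) ×ˢ Ioo (c j) (d j) := ⟨hxj, hyj⟩
      have hmem2 : ((x, y) : ℝ × ℝ) ∈ Ioo (a i) (b i) ×ˢ Ioo (c i) (d i) := ⟨hxi, hyi⟩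
      exact Set.disjoint_left.mp (hdisj (mem_univ j) (mem_univ i) hji) hmem1 hmem2
    -- bottom rectangle
    have hmid : A ≤ (A + B) / 2 ∧ (A + B) / 2 ≤ B := ⟨by linarith, by linarith⟩
    have hk0 : ∃ k0, ((A + B) / 2, C) ∈ Rect (a k0) (b k0) (c k0) (d k0) := by
      have : ((A + B) / 2, C) ∈ Rect A B C D := ⟨⟨hmid.1, hmid.2⟩, ⟨le_refl C, hCD.le⟩⟩
      rw [← hcover] at this
      simpa using this
    obtain ⟨k0, hk0⟩ := hk0
    have hk0i : k0 ≠ i := fun e => by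
      have := hk0.2.1
      rw [e] at this
      exact absurd this (not_le.mpr hc)
    have hk0below : d k0 ≤ c i := by
      rcases htri k0 hk0i with h1 | h1
      · exact h1
      · exfalso; have := hk0.2.1; linarith [(hnd i).2]
    -- top rectangle
    have hm0 : ∃ m0, ((A + B) / 2, D) ∈ Rect (a m0) (b m0) (c m0) (d m0) := by
      have : ((A + B) / 2, D) ∈ Rect A B C D := ⟨⟨hmid.1, hmid.2⟩, ⟨hCD.le, le_refl D⟩⟩
      rw [← hcover] at this
      simpa using this
    obtain ⟨m0, hm0⟩ := hm0
    have hm0i : m0 ≠ i := fun e => by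
      have := hm0.2.2
      rw [e] at this
      exact absurd this (not_le.mpr hd)
    have hm0above : d i ≤ c m0 := by
      rcases htri m0 hm0i with h1 | h1
      · exfalso; have := hm0.2.2; linarith [(hnd i).2]
      · exact h1
    -- Below is preserved along walks in the induced graph
    have hstep : ∀ (u v : ({i}ᶜ : Set (Fin n))),
        (G.induce ({i}ᶜ : Set (Fin n))).Adj u v → d u.1 ≤ c i → d v.1 ≤ c i := by
      intro u v huv hu
      have hadj : G.Adj u.1 v.1 := huv
      rcases htri v.1 v.2 with h1 | h1
      · exact h1
      · exfalso
        rw [hG, adjGraph, SimpleGraph.fromRel_adj] at hadj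
        obtain ⟨-, hnt | hnt⟩ := hadj <;>
        · obtain ⟨pt, hpt⟩ := hnt.nonempty
          have hy1 : pt.2 ≤ d u.1 := by
            first
            | exact hpt.1.2.2
            | exact hpt.2.2.2
          have hy2 : c v.1 ≤ pt.2 := by
            first
            | exact hpt.2.2.1
            | exact hpt.1.2.1
          linarith [(hnd i).2]
    have hwalk : ∀ (u v : ({i}ᶜ : Set (Fin n))),
        (G.induce ({i}ᶜ : Set (Fin n))).Walk u v → d u.1 ≤ c i → d v.1 ≤ c i := by
      intro u v w
      induction w with
      | nil => exact id
      | cons huv _ ih => exact fun hu => ih (hstep _ _ huv hu)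
    have hku : (k0 : Fin n) ∈ ({i}ᶜ : Set (Fin n)) := hk0i
    have hmu : (m0 : Fin n) ∈ ({i}ᶜ : Set (Fin n)) := hm0i
    obtain ⟨w⟩ := hconn.preconnected ⟨k0, hku⟩ ⟨m0, hmu⟩
    have := hwalk _ _ w hk0below
    have hDm : D ≤ d m0 := hm0.2.2
    linarith [(hnd i).2]
end
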